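/- For every real number t, the biquadratic form p_t(x,y) = ((t²−1)²x₁²+x₂²+t⁴x₃²)y₁² + ((t²−1)²x₂²+x₃²+t⁴x₁²)y₂² + ((t²−1)²x₃²+x₁²+t⁴x₂²)y₃² − 2(t⁴−t²+1)(x₁x₂y₁y₂ + x₁x₃y₁y₃ + x₂x₃y₂y₃) satisfies p_t(x,y) ≥ 0 for all x, y ∈ ℝ³. -/

import Mathlib

/-!
Write `m = t⁴ - t² + 1`. Then `Φ_t(xxᵀ) = E - m xxᵀ` with `E` diagonal, and by Cauchy–Schwarz
this is positive semidefinite as soon as `m ∑ xᵢ² / Eᵢᵢ ≤ 1`, i.e. as soon as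
`E₁₁E₂₂E₃₃ - m ∑ xᵢ² EⱼⱼEₖₖ ≥ 0`. That determinant is `(t² - 1)²` times a cyclic cubic in
`(x₁², x₂², x₃²)`, which is nonnegative on the orthant by an explicit decomposition around its
smallest variable. If some `Eᵢᵢ` vanishes, at most one `xᵢ` is nonzero and `p_t` has no cross
terms.
-/

/-- The biquadratic form `p_t(x, y) = yᵀ Φ_t(xxᵀ) y`. -/
def pform (t : ℝ) (x y : Fin 3 → ℝ) : ℝ :=
  ((t^2-1)^2 * x 0^2 + x 1^2 + t^4 * x 2^2) * y 0^2 +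
  ((t^2-1)^2 * x 1^2 + x 2^2 + t^4 * x 0^2) * y 1^2 +
  ((t^2-1)^2 * x 2^2 + x 0^2 + t^4 * x 1^2) * y 2^2 -
  2 * (t^4-t^2+1) * (x 0 * x 1 * y 0 * y 1 + x 0 * x 2 * y 0 * y 2 + x 1 * x 2 * y 1 * y 2)

open Finset

theorem mul_sq_sum_le_sum_mul_sq {ι : Type*} [Fintype ι] {m : ℝ} {e : ι → ℝ} (x y : ι → ℝ)
    (hm : 0 ≤ m) (he : ∀ i, 0 < e i) (hx : m * ∑ i, x i ^ 2 / e i ≤ 1) :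
    m * (∑ i, x i * y i) ^ 2 ≤ ∑ i, e i * y i ^ 2 := by
  have cauchySchwarz : (∑ i, x i * y i) ^ 2 ≤ (∑ i, x i ^ 2 / e i) * ∑ i, e i * y i ^ 2 :=
    sum_sq_le_sum_mul_sum_of_sq_le_mul _ (fun i _ ↦ div_nonneg (sq_nonneg _) (he i).le)
      (fun i _ ↦ mul_nonneg (he i).le (sq_nonneg _))
      (fun i _ ↦ le_of_eq (by field_simp [(he i).ne']))
  calc m * (∑ i, x i * y i) ^ 2 ≤ (m * ∑ i, x i ^ 2 / e i) * ∑ i, e i * y i ^ 2 := by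
        rw [mul_assoc]; exact mul_le_mul_of_nonneg_left cauchySchwarz hm
    _ ≤ ∑ i, e i * y i ^ 2 :=
        mul_le_of_le_one_left (sum_nonneg fun i _ ↦ mul_nonneg (he i).le (sq_nonneg _)) hx

/-- With `a = t²` and `sᵢ = xᵢ²`, this is the determinant of `Φ_t(xxᵀ)` divided by `(t² - 1)²`. -/
def cyclicCubic (a s₁ s₂ s₃ : ℝ) : ℝ :=
  a ^ 2 * (s₁ ^ 3 + s₂ ^ 3 + s₃ ^ 3) + (a ^ 4 - 2 * a) * (s₁ ^ 2 * s₂ + s₂ ^ 2 * s₃ + s₃ ^ 2 * s₁)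
    + (1 - 2 * a ^ 3) * (s₁ ^ 2 * s₃ + s₂ ^ 2 * s₁ + s₃ ^ 2 * s₂)
    - 3 * (a ^ 4 - 2 * a ^ 3 + a ^ 2 - 2 * a + 1) * (s₁ * s₂ * s₃)

theorem cyclicCubic_rotate (a s₁ s₂ s₃ : ℝ) :
    cyclicCubic a s₁ s₂ s₃ = cyclicCubic a s₂ s₃ s₁ := by
  unfold cyclicCubic; ring

theorem cyclicCubic_nonneg_of_min (a : ℝ) {s₁ s₂ s₃ : ℝ} (h₁ : 0 ≤ s₁) (h₁₂ : s₁ ≤ s₂)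
    (h₁₃ : s₁ ≤ s₃) : 0 ≤ cyclicCubic a s₁ s₂ s₃ := by
  obtain ⟨u, hu, rfl⟩ : ∃ u, 0 ≤ u ∧ s₂ = s₁ + u := ⟨s₂ - s₁, by linarith, by ring⟩
  obtain ⟨v, hv, rfl⟩ : ∃ v, 0 ≤ v ∧ s₃ = s₁ + v := ⟨s₃ - s₁, by linarith, by ring⟩
  have h : cyclicCubic a s₁ (s₁ + u) (s₁ + v)
      = (u + a ^ 2 * v) * (a * u - v) ^ 2 + s₁ * (a ^ 2 - a + 1) ^ 2 * (u ^ 2 - u * v + v ^ 2) := by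
    unfold cyclicCubic; ring
  have hq : 0 ≤ u ^ 2 - u * v + v ^ 2 := by nlinarith [sq_nonneg (u - v)]
  rw [h]; positivity

theorem cyclicCubic_nonneg (a : ℝ) {s₁ s₂ s₃ : ℝ} (h₁ : 0 ≤ s₁) (h₂ : 0 ≤ s₂) (h₃ : 0 ≤ s₃) :
    0 ≤ cyclicCubic a s₁ s₂ s₃ := by
  rcases le_total s₁ s₂ with h₁₂ | h₂₁ <;> rcases le_total s₂ s₃ with h₂₃ | h₃₂ <;>
    rcases le_total s₁ s₃ with h₁₃ | h₃₁
  all_goals first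
    | exact cyclicCubic_nonneg_of_min a h₁ (by linarith) (by linarith)
    | rw [cyclicCubic_rotate]; exact cyclicCubic_nonneg_of_min a h₂ (by linarith) (by linarith)
    | rw [← cyclicCubic_rotate]; exact cyclicCubic_nonneg_of_min a h₃ (by linarith) (by linarith)

/-- The diagonal part `E` in the splitting `Φ_t(xxᵀ) = E - (t⁴ - t² + 1) xxᵀ`. -/
def weight (t : ℝ) (x : Fin 3 → ℝ) (i : Fin 3) : ℝ :=
  (2 * t ^ 4 - 3 * t ^ 2 + 2) * x i ^ 2 + x (i + 1) ^ 2 + t ^ 4 * x (i + 2) ^ 2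

theorem pform_eq (t : ℝ) (x y : Fin 3 → ℝ) :
    pform t x y = ∑ i, weight t x i * y i ^ 2 - (t ^ 4 - t ^ 2 + 1) * (∑ i, x i * y i) ^ 2 := by
  simp only [pform, weight, Fin.sum_univ_three, Fin.isValue, zero_add, Fin.reduceAdd]
  ring

theorem det_weight_eq (t : ℝ) (x : Fin 3 → ℝ) : weight t x 0 * weight t x 1 * weight t x 2
    - (t ^ 4 - t ^ 2 + 1) * (x 0 ^ 2 * weight t x 1 * weight t x 2
      + x 1 ^ 2 * weight t x 2 * weight t x 0 + x 2 ^ 2 * weight t x 0 * weight t x 1)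
    = (t ^ 2 - 1) ^ 2 * cyclicCubic (t ^ 2) (x 0 ^ 2) (x 1 ^ 2) (x 2 ^ 2) := by
  simp only [weight, cyclicCubic, Fin.isValue, zero_add, Fin.reduceAdd]
  ring

theorem mul_sum_sq_div_weight_le_one (t : ℝ) {x : Fin 3 → ℝ} (hw : ∀ i, 0 < weight t x i) :
    (t ^ 4 - t ^ 2 + 1) * ∑ i, x i ^ 2 / weight t x i ≤ 1 := by
  have hdet : 0 ≤ weight t x 0 * weight t x 1 * weight t x 2
      - (t ^ 4 - t ^ 2 + 1) * (x 0 ^ 2 * weight t x 1 * weight t x 2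
        + x 1 ^ 2 * weight t x 2 * weight t x 0 + x 2 ^ 2 * weight t x 0 * weight t x 1) := by
    rw [det_weight_eq]
    exact mul_nonneg (sq_nonneg _) (cyclicCubic_nonneg _ (sq_nonneg _) (sq_nonneg _) (sq_nonneg _))
  have h0 := hw 0; have h1 := hw 1; have h2 := hw 2
  rw [Fin.sum_univ_three, div_add_div _ _ h0.ne' h1.ne', div_add_div _ _ (by positivity) h2.ne',
    mul_div_assoc', div_le_one (by positivity)]
  linarith

theorem eq_zero_of_weight_nonpos {t : ℝ} {x : Fin 3 → ℝ} {i : Fin 3} (h : weight t x i ≤ 0) :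
    x i = 0 ∧ x (i + 1) = 0 := by
  have hc : 0 < 2 * t ^ 4 - 3 * t ^ 2 + 2 := by nlinarith [sq_nonneg (4 * t ^ 2 - 3)]
  unfold weight at h
  have hi := sq_nonneg (x i)
  have hi₁ := sq_nonneg (x (i + 1))
  have hi₂ : 0 ≤ t ^ 4 * x (i + 2) ^ 2 := by positivity
  refine ⟨pow_eq_zero_iff two_ne_zero |>.mp ?_, pow_eq_zero_iff two_ne_zero |>.mp ?_⟩ <;> nlinarith

theorem pform_nonneg_of_mul_eq_zero (t : ℝ) {x : Fin 3 → ℝ} (y : Fin 3 → ℝ)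
    (h₀₁ : x 0 * x 1 = 0) (h₀₂ : x 0 * x 2 = 0) (h₁₂ : x 1 * x 2 = 0) : 0 ≤ pform t x y := by
  rw [pform, h₀₁, h₀₂, h₁₂]
  simp only [zero_mul, add_zero, mul_zero, sub_zero]
  positivity

/-- For every real `t`, the biquadratic form `p_t` is nonnegative on `ℝ³ × ℝ³`. -/
theorem pform_nonneg (t : ℝ) (x y : Fin 3 → ℝ) : 0 ≤ pform t x y := by
  by_cases hw : ∀ i, 0 < weight t x i
  · rw [pform_eq, sub_nonneg]
    exact mul_sq_sum_le_sum_mul_sq x y (by nlinarith [sq_nonneg (t ^ 2 - 1), sq_nonneg t]) hw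
      (mul_sum_sq_div_weight_le_one t hw)
  · push Not at hw
    obtain ⟨i, hi⟩ := hw
    obtain ⟨hxi, hxi'⟩ := eq_zero_of_weight_nonpos hi
    apply pform_nonneg_of_mul_eq_zero
    all_goals fin_cases i <;> simp_all
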